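/- arXiv:1106.4443 — 3 statements merged into one kernel-verified Lean document; each statement's English description precedes it below -/
import Mathlib

section
/- Let φ and ψ be two bracketed implications on the n distinct propositional variables p_1, …, p_n (i.e., two well-formed bracketings of p_1 → p_2 → ⋯ → p_n). If φ and ψ define the same propositional function, i.e., for every valuation ν : {p_1,…,p_n} → {false, true} the truth values of φ and ψ under ν agree, then φ = ψ. Equivalently, the map sending a bracketed implication on n variables to its truth function (Fin n → Bool) → Bool is injective. -/
/-- Bracketed implications: `BImp n` is the type of well-formed bracketings of
`p₁ → p₂ → ⋯ → pₙ` (1-indexed variables correspond to 0-indexed `Fin n`). -/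
inductive BImp : ℕ → Type where
  | leaf : BImp 1
  | node : {i j : ℕ} → BImp i → BImp j → BImp (i + j)

/-- Evaluation of a bracketed implication under a valuation `ν : Fin n → Bool`:
a leaf evaluates to the value of its variable, and a node `ψ → χ` evaluates to the
Boolean implication, with `ψ` evaluated on the first coordinates and `χ` on the last. -/
def BImp.eval : {n : ℕ} → BImp n → (Fin n → Bool) → Bool
  | _, .leaf, ν => ν 0
  | _, .node ψ χ, ν =>
      !(ψ.eval fun k => ν (Fin.castAdd _ k)) || χ.eval fun k => ν (Fin.natAdd _ k)

namespace BImpAux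

/-- mixing two valuations at cut `k` -/
def mixA (k : ℕ) {n : ℕ} (u v : Fin n → Bool) : Fin n → Bool :=
  fun x => if (x : ℕ) < k then u x else v x

/-- a set of valuations is a "product" at cut `k` -/
def IsProdAt (k : ℕ) {n : ℕ} (S : (Fin n → Bool) → Prop) : Prop :=
  ∀ u v, S u → S v → S (mixA k u v)

theorem one_le : ∀ {n} (_ : BImp n), 1 ≤ n := by
  intro n φ
  induction φ with
  | leaf => exact le_refl 1
  | @node i j a b iha ihb => omega

theorem cases' : ∀ {n} (φ : BImp n),
    (∃ _ : n = 1, HEq φ BImp.leaf) ∨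
    ∃ (i j : ℕ) (a : BImp i) (b : BImp j) (_ : i + j = n), HEq φ (BImp.node a b) := by
  intro n φ
  cases φ with
  | leaf => exact Or.inl ⟨rfl, HEq.rfl⟩
  | @node i j a b => exact Or.inr ⟨i, j, a, b, rfl, HEq.rfl⟩

theorem eval_node {i j : ℕ} (a : BImp i) (b : BImp j) (ν : Fin (i + j) → Bool) :
    (BImp.node a b).eval ν =
      (!(a.eval fun x => ν (Fin.castAdd j x)) || b.eval fun x => ν (Fin.natAdd i x)) := rfl

theorem append_comp_cast {i j : ℕ} (u : Fin i → Bool) (v : Fin j → Bool) :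
    (fun x => Fin.append u v (Fin.castAdd j x)) = u :=
  funext fun x => Fin.append_left u v x

theorem append_comp_nat {i j : ℕ} (u : Fin i → Bool) (v : Fin j → Bool) :
    (fun x => Fin.append u v (Fin.natAdd i x)) = v :=
  funext fun x => Fin.append_right u v x

theorem eval_append {i j : ℕ} (a : BImp i) (b : BImp j) (u : Fin i → Bool)
    (v : Fin j → Bool) :
    (BImp.node a b).eval (Fin.append u v) = (!a.eval u || b.eval v) := by
  rw [eval_node, append_comp_cast, append_comp_nat]

theorem mix_cast_comm {i j k : ℕ} (u v : Fin (i + j) → Bool) :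
    (fun x : Fin i => mixA k u v (Fin.castAdd j x)) =
      mixA k (fun x => u (Fin.castAdd j x)) (fun x => v (Fin.castAdd j x)) := rfl

theorem mix_cast_of_ge {i j k : ℕ} (h : i ≤ k) (u v : Fin (i + j) → Bool) :
    (fun x : Fin i => mixA k u v (Fin.castAdd j x)) = fun x => u (Fin.castAdd j x) :=
  funext fun x => if_pos (lt_of_lt_of_le x.isLt h)

theorem mix_nat_of_le {i j k : ℕ} (h : k ≤ i) (u v : Fin (i + j) → Bool) :
    (fun x : Fin j => mixA k u v (Fin.natAdd i x)) = fun x => v (Fin.natAdd i x) :=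
  funext fun x => by
    have h2 : ¬ ((Fin.natAdd i x : Fin (i + j)) : ℕ) < k := by
      rw [Fin.coe_natAdd]; omega
    simp only [mixA]
    rw [if_neg h2]

theorem mix_nat_comm {i j k : ℕ} (u v : Fin (i + j) → Bool) :
    (fun x : Fin j => mixA k u v (Fin.natAdd i x)) =
      mixA (k - i) (fun x => u (Fin.natAdd i x)) (fun x => v (Fin.natAdd i x)) :=
  funext fun x => by
    simp only [mixA, Fin.coe_natAdd]
    by_cases h : i + (x : ℕ) < k
    · rw [if_pos h, if_pos (by omega)]
    · rw [if_neg h, if_neg (by omega)]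

theorem exists_both : ∀ {n} (φ : BImp n),
    (∃ ν, φ.eval ν = true) ∧ (∃ ν, φ.eval ν = false) := by
  intro n φ
  induction φ with
  | leaf => exact ⟨⟨fun _ => true, rfl⟩, ⟨fun _ => false, rfl⟩⟩
  | @node i j a b iha ihb =>
    obtain ⟨⟨u1, hu1⟩, ⟨u0, hu0⟩⟩ := iha
    obtain ⟨⟨v1, hv1⟩, ⟨v0, hv0⟩⟩ := ihb
    constructor
    · exact ⟨Fin.append u0 v0, by rw [eval_append, hu0]; rfl⟩
    · exact ⟨Fin.append u1 v0, by rw [eval_append, hu1, hv0]; rfl⟩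

/-- For `n ≥ 2`, the truth set of a bracketed implication is not a product at any cut. -/
theorem notProdT : ∀ n, ∀ φ : BImp n, ∀ k, 1 ≤ k → k < n →
    ¬ IsProdAt k (fun ν => φ.eval ν = true) := by
  intro n
  induction n using Nat.strong_induction_on with
  | _ n IH =>
  intro φ k hk1 hkn hP
  rcases cases' φ with ⟨h1, _⟩ | ⟨i, j, a, b, hij, hφ⟩
  · omega
  · subst hij
    obtain rfl := eq_of_heq hφ
    have hi1 := one_le a; have hj1 := one_le b
    obtain ⟨⟨u1, hu1⟩, ⟨u0, hu0⟩⟩ := exists_both a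
    obtain ⟨⟨v1, hv1⟩, ⟨v0, hv0⟩⟩ := exists_both b
    rcases lt_trichotomy k i with hki | rfl | hik
    · -- cut strictly inside the left part
      have Q : ∀ u u' : Fin i → Bool, a.eval u' = false →
          a.eval (mixA k u u') = false := by
        intro u u' h'
        have t1 : (BImp.node a b).eval (Fin.append u v1) = true := by
          rw [eval_append, hv1]; simp
        have t2 : (BImp.node a b).eval (Fin.append u' v0) = true := by
          rw [eval_append, h', hv0]; rfl
        have t3 : (BImp.node a b).eval
            (mixA k (Fin.append u v1) (Fin.append u' v0)) = true := hP _ _ t1 t2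
        rw [eval_node, mix_cast_comm, append_comp_cast, append_comp_cast,
            mix_nat_of_le (le_of_lt hki), append_comp_nat, hv0] at t3
        simpa using t3
      rcases cases' a with ⟨h1, _⟩ | ⟨s, t, a1, a2, hst, ha⟩
      · omega
      · subst hst
        obtain rfl := eq_of_heq ha
        have hs1 := one_le a1; have ht1 := one_le a2
        obtain ⟨⟨p1, hp1⟩, ⟨p0, hp0⟩⟩ := exists_both a1
        obtain ⟨⟨q1, hq1⟩, ⟨q0, hq0⟩⟩ := exists_both a2
        by_cases hsk : s ≤ k
        · have hfa : (BImp.node a1 a2).eval (Fin.append p1 q0) = false := by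
            rw [eval_append, hp1, hq0]; rfl
          have hQ := Q (Fin.append p0 q0) (Fin.append p1 q0) hfa
          rw [eval_node, mix_cast_of_ge hsk, append_comp_cast, hp0] at hQ
          simp at hQ
        · push_neg at hsk
          refine IH s (by omega) a1 k hk1 hsk ?_
          intro p p' hp hp'
          have hfa : (BImp.node a1 a2).eval (Fin.append p' q0) = false := by
            rw [eval_append, hp', hq0]; rfl
          have hQ := Q (Fin.append p q0) (Fin.append p' q0) hfa
          rw [eval_node, mix_cast_comm, append_comp_cast, append_comp_cast] at hQ
          simp only [Bool.or_eq_false_iff, Bool.not_eq_eq_eq_not, Bool.not_false] at hQ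
          exact hQ.1
    · -- cut exactly at the split
      have t1 : (BImp.node a b).eval (Fin.append u1 v1) = true := by
        rw [eval_append, hu1, hv1]; rfl
      have t2 : (BImp.node a b).eval (Fin.append u0 v0) = true := by
        rw [eval_append, hu0, hv0]; rfl
      have t3 : (BImp.node a b).eval
          (mixA k (Fin.append u1 v1) (Fin.append u0 v0)) = true := hP _ _ t1 t2
      rw [eval_node, mix_cast_of_ge (le_refl k), append_comp_cast, hu1,
          mix_nat_of_le (le_refl k), append_comp_nat, hv0] at t3
      simp at t3
    · -- cut strictly inside the right part
      refine IH j (by omega) b (k - i) (by omega) (by omega) ?_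
      intro w w' hw hw'
      have t1 : (BImp.node a b).eval (Fin.append u1 w) = true := by
        rw [eval_append, hw]; simp
      have t2 : (BImp.node a b).eval (Fin.append u1 w') = true := by
        rw [eval_append, hw']; simp
      have t3 : (BImp.node a b).eval
          (mixA k (Fin.append u1 w) (Fin.append u1 w')) = true := hP _ _ t1 t2
      rw [eval_node, mix_cast_of_ge (le_of_lt hik), append_comp_cast, hu1,
          mix_nat_comm, append_comp_nat, append_comp_nat] at t3
      simpa using t3

/-- The falsifying set of a node is a product at the split cut. -/
theorem prodF : ∀ {n} (φ : BImp n) {k l} (c : BImp k) (d : BImp l)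
    (_ : k + l = n), HEq φ (BImp.node c d) →
    IsProdAt k (fun ν => φ.eval ν = false) := by
  intro n φ k l c d h hh
  subst h
  obtain rfl := eq_of_heq hh
  intro u v hu hv
  have hu' : (BImp.node c d).eval u = false := hu
  have hv' : (BImp.node c d).eval v = false := hv
  rw [eval_node] at hu' hv'
  show (BImp.node c d).eval (mixA k u v) = false
  rw [eval_node, mix_cast_of_ge (le_refl k), mix_nat_of_le (le_refl k)]
  simp only [Bool.or_eq_false_iff, Bool.not_eq_eq_eq_not, Bool.not_false] at hu' hv' ⊢
  exact ⟨hu'.1, hv'.2⟩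

/-- The falsifying set of a node is not a product at any cut below the split. -/
theorem notProdF : ∀ {n} (φ : BImp n) {k l} (c : BImp k) (d : BImp l)
    (_ : k + l = n), HEq φ (BImp.node c d) → ∀ t, 1 ≤ t → t < k →
    ¬ IsProdAt t (fun ν => φ.eval ν = false) := by
  intro n φ k l c d h hh t ht1 htk hP
  subst h
  obtain rfl := eq_of_heq hh
  obtain ⟨_, ⟨v0, hv0⟩⟩ := exists_both d
  refine notProdT k c t ht1 htk ?_
  intro u u' hu hu'
  have m1 : (BImp.node c d).eval (Fin.append u v0) = false := by
    rw [eval_append, hu, hv0]; rfl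
  have m2 : (BImp.node c d).eval (Fin.append u' v0) = false := by
    rw [eval_append, hu', hv0]; rfl
  have t3 := hP _ _ m1 m2
  have t3' : (BImp.node c d).eval
      (mixA t (Fin.append u v0) (Fin.append u' v0)) = false := t3
  rw [eval_node, mix_cast_comm, append_comp_cast, append_comp_cast,
      mix_nat_of_le (le_of_lt htk), append_comp_nat, hv0] at t3'
  simpa using t3'

theorem IsProdAt_congr {n k : ℕ} {S S' : (Fin n → Bool) → Prop}
    (h : ∀ ν, S ν ↔ S' ν) (hP : IsProdAt k S) : IsProdAt k S' :=
  fun u v hu hv => (h _).1 (hP u v ((h _).2 hu) ((h _).2 hv))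

theorem main : ∀ n (φ ψ : BImp n), (∀ ν, φ.eval ν = ψ.eval ν) → φ = ψ := by
  intro n
  induction n using Nat.strong_induction_on with
  | _ n IH =>
  intro φ ψ h
  rcases cases' φ with ⟨h1, hφ⟩ | ⟨i, j, a, b, hij, hφ⟩
  · rcases cases' ψ with ⟨h2, hψ⟩ | ⟨k, l, c, d, hkl, hψ⟩
    · subst h1
      obtain rfl := eq_of_heq hφ
      obtain rfl := eq_of_heq hψ
      rfl
    · exfalso; have := one_le c; have := one_le d; omega
  · rcases cases' ψ with ⟨h2, hψ⟩ | ⟨k, l, c, d, hkl, hψ⟩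
    · exfalso; have := one_le a; have := one_le b; omega
    · have hFiff : ∀ ν : Fin n → Bool, (φ.eval ν = false) ↔ (ψ.eval ν = false) :=
        fun ν => by rw [h ν]
      have hP1 : IsProdAt i (fun ν => φ.eval ν = false) := prodF φ a b hij hφ
      have hP2 : IsProdAt k (fun ν => ψ.eval ν = false) := prodF ψ c d hkl hψ
      have hki : ¬ k < i := fun hlt => notProdF φ a b hij hφ k (one_le c) hlt
        (IsProdAt_congr (fun ν => (hFiff ν).symm) hP2)
      have hik : ¬ i < k := fun hlt => notProdF ψ c d hkl hψ i (one_le a) hlt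
        (IsProdAt_congr hFiff hP1)
      have hk : k = i := by omega
      subst hk
      have hl : l = j := by omega
      subst hl
      subst hij
      obtain rfl := eq_of_heq hφ
      obtain rfl := eq_of_heq hψ
      have H : ∀ u v, (!a.eval u || b.eval v) = (!c.eval u || d.eval v) := by
        intro u v
        have := h (Fin.append u v)
        rwa [eval_append, eval_append] at this
      obtain ⟨⟨u1, hu1⟩, _⟩ := exists_both a
      obtain ⟨_, ⟨v0, hv0⟩⟩ := exists_both b
      obtain ⟨_, ⟨w0, hw0⟩⟩ := exists_both d
      have hac : ∀ u, a.eval u = c.eval u := by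
        intro u
        cases ha : a.eval u <;> cases hc : c.eval u
        · rfl
        · have := H u w0
          rw [ha, hc, hw0] at this
          simp at this
        · have := H u v0
          rw [ha, hc, hv0] at this
          simp at this
        · rfl
      have hbd : ∀ v, b.eval v = d.eval v := by
        intro v
        have hcu1 : c.eval u1 = true := (hac u1).symm.trans hu1
        have := H u1 v
        rw [hu1, hcu1] at this
        simpa using this
      have hj1 := one_le b; have hi1 := one_le a
      have ea : a = c := IH _ (by omega) a c hac
      have eb : b = d := IH _ (by omega) b d hbd
      rw [ea, eb]

end BImpAux

/-- Two bracketed implications on `n` variables defining the same propositional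
function are equal; i.e. the map to truth functions is injective. -/
theorem bracketed_implication_unique (n : ℕ) (φ ψ : BImp n)
    (h : ∀ ν : Fin n → Bool, φ.eval ν = ψ.eval ν) : φ = ψ :=
  BImpAux.main n φ ψ h
end

section
/- Let φ be a bracketed implication on the n distinct variables p_1, …, p_n, with n ≥ 1. For 1 ≤ i ≤ n let ν_i be the valuation assigning false to p_i and true to all other variables. Then the truth value of φ under ν_n is false, while for every i ≠ n the truth value of φ under ν_i is true. -/
lemma BImp.pos : ∀ {n : ℕ}, BImp n → 1 ≤ n
  | _, .leaf => le_refl 1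
  | _, .node ψ _ => by have := ψ.pos; omega

lemma BImp.eval_true : ∀ {n : ℕ} (φ : BImp n), φ.eval (fun _ => true) = true
  | _, .leaf => rfl
  | _, .node ψ χ => by
      show (!ψ.eval (fun _ => true) || χ.eval (fun _ => true)) = true
      rw [ψ.eval_true, χ.eval_true]; rfl

lemma BImp.key : ∀ {n : ℕ} (φ : BImp n) (i : Fin n),
    φ.eval (fun j => decide (j ≠ i)) = decide (i.val ≠ n - 1)
  | _, .leaf, i => by
      have : i = 0 := Subsingleton.elim _ _
      subst this; simp [BImp.eval]
  | _, .node (i := a) (j := b) ψ χ, i => by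
      have ha := ψ.pos; have hb := χ.pos
      show (!ψ.eval (fun k => decide (Fin.castAdd b k ≠ i)) ||
            χ.eval (fun k => decide (Fin.natAdd a k ≠ i))) = _
      by_cases h : i.val < a
      · have hR : (fun k : Fin b => decide (Fin.natAdd a k ≠ i)) = fun _ => true := by
          funext k
          have := k.isLt
          simp [Fin.ext_iff]
          omega
        rw [hR, χ.eval_true]
        simp
        omega
      · have hL : (fun k : Fin a => decide (Fin.castAdd b k ≠ i)) = fun _ => true := by
          funext k; have := k.isLt; simp [Fin.ext_iff]; omega
        have hR : (fun k : Fin b => decide (Fin.natAdd a k ≠ i)) =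
            fun k => decide (k ≠ (⟨i.val - a, by have := i.isLt; omega⟩ : Fin b)) := by
          funext k; have := k.isLt; simp [Fin.ext_iff]; omega
        rw [hL, ψ.eval_true, hR, χ.key]
        simp only [Bool.not_true, Bool.false_or, decide_eq_decide]
        omega

/-- For the valuation `ν_i` which is false exactly at `p_i`, any bracketed
implication `φ` on `n` variables evaluates to false under `ν_n` and to true
under `ν_i` for `i ≠ n`. -/
theorem bracketed_implication_eval_nu (n : ℕ) (hn : 1 ≤ n) (φ : BImp n) :
    φ.eval (fun j => decide (j.val ≠ n - 1)) = false ∧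
    ∀ i : Fin n, i.val ≠ n - 1 → φ.eval (fun j => decide (j ≠ i)) = true := by
  constructor
  · have h := BImp.key φ ⟨n - 1, by omega⟩
    have he : (fun j : Fin n => decide (j.val ≠ n - 1)) =
        (fun j => decide (j ≠ (⟨n - 1, by omega⟩ : Fin n))) := by
      funext j; simp [Fin.ext_iff]
    rw [he, h]; simp
  · intro i hi; rw [BImp.key]; simpa using hi
end

section
/- For every n ≥ 1, the number of bracketed implications on n distinct variables equals the Catalan number C_n = (1/n)·binomial(2n−2, n−1). Consequently, by the uniqueness of truth tables of bracketed implications, C_n is also the number of distinct propositional functions (Fin n → Bool) → Bool defined by bracketed implications on n variables. -/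
/-- The Catalan number `C n = (1/n) * binomial (2n-2) (n-1)` (the division is exact). -/
def catalanC (n : ℕ) : ℕ := (2 * n - 2).choose (n - 1) / n

/-!
Bracketed implications on `n` variables are binary trees with `n` leaves, so there are
`catalan (n - 1)` of them. They also have pairwise distinct truth tables: a formula is true as
soon as its last variable is, and false when only its last variable is false. Making one more
variable `c` false, the formula `ψ → χ` (with `c` inside `ψ`) is true exactly when `c` is the
last variable of `ψ`, which locates the split; `ψ` is then read off by forcing `χ` false and
`χ` by forcing `ψ` true, and induction finishes the argument.
-/

namespace BImp

def toTree : {n : ℕ} → BImp n → BinaryTree Unit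
  | _, .leaf => .nil
  | _, .node ψ χ => .node () ψ.toTree χ.toTree

def ofTree : BinaryTree Unit → Σ n, BImp n
  | .nil => ⟨1, .leaf⟩
  | .node _ l r => ⟨_, .node (ofTree l).2 (ofTree r).2⟩

theorem ofTree_toTree : ∀ {n : ℕ} (φ : BImp n), ofTree φ.toTree = ⟨n, φ⟩
  | _, .leaf => rfl
  | _, .node ψ χ => by
    rw [toTree, ofTree, ofTree_toTree ψ, ofTree_toTree χ]

theorem toTree_ofTree : ∀ t : BinaryTree Unit, (ofTree t).2.toTree = t
  | .nil => rfl
  | .node _ l r => by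
    rw [ofTree, toTree, toTree_ofTree l, toTree_ofTree r]

theorem numLeaves_toTree : ∀ {n : ℕ} (φ : BImp n), φ.toTree.numLeaves = n
  | _, .leaf => rfl
  | _, .node ψ χ => by
    rw [toTree, BinaryTree.numLeaves, numLeaves_toTree ψ, numLeaves_toTree χ]

def sigmaEquivBinaryTree : (Σ n, BImp n) ≃ BinaryTree Unit where
  toFun x := x.2.toTree
  invFun := ofTree
  left_inv x := ofTree_toTree x.2
  right_inv := toTree_ofTree

def equivNumLeavesEq (n : ℕ) : BImp n ≃ {t : BinaryTree Unit // t.numLeaves = n} :=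
  (Equiv.sigmaSubtype n).symm.trans <|
    sigmaEquivBinaryTree.subtypeEquiv fun x => by rw [← numLeaves_toTree x.2]; rfl

theorem card_add_one (n : ℕ) : Nat.card (BImp (n + 1)) = catalan n := by
  rw [Nat.card_congr (equivNumLeavesEq (n + 1)), ← BinaryTree.treesOfNumNodesEq_card_eq_catalan,
    ← Nat.card_eq_finsetCard]
  exact Nat.card_congr <| Equiv.subtypeEquivRight fun t => by
    rw [BinaryTree.mem_treesOfNumNodesEq, BinaryTree.numLeaves_eq_numNodes_succ,
      Nat.add_right_cancel_iff]

theorem index_pos : ∀ {n : ℕ}, BImp n → 0 < n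
  | _, .leaf => Nat.one_pos
  | _, .node ψ _ => Nat.add_pos_left ψ.index_pos _

/-- Unlike `eval`, its type does not depend on the number of variables, so formulas of different
sizes can be compared. -/
def evalNat {n : ℕ} (φ : BImp n) (ν : ℕ → Bool) : Bool :=
  φ.eval fun k => ν k

theorem evalNat_node {i j : ℕ} (ψ : BImp i) (χ : BImp j) (ν : ℕ → Bool) :
    (node ψ χ).evalNat ν = (!ψ.evalNat ν || χ.evalNat fun k => ν (i + k)) :=
  rfl

theorem evalNat_congr {n : ℕ} (φ : BImp n) {ν ν' : ℕ → Bool} (h : ∀ k < n, ν k = ν' k) :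
    φ.evalNat ν = φ.evalNat ν' :=
  congrArg φ.eval (funext fun k => h k k.isLt)

theorem evalNat_eq_true : ∀ {n : ℕ} (φ : BImp n) {ν : ℕ → Bool}, ν (n - 1) = true →
    φ.evalNat ν = true
  | _, .leaf, _, h => h
  | _, .node (i := i) ψ χ, ν, h => by
    have := χ.index_pos
    rw [evalNat_node, χ.evalNat_eq_true (by rwa [← Nat.add_sub_assoc this]), Bool.or_true]

theorem evalNat_eq_false : ∀ {n : ℕ} (φ : BImp n) {ν : ℕ → Bool},
    (∀ k < n, ν k = decide (k + 1 < n)) → φ.evalNat ν = false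
  | _, .leaf, _, h => h 0 Nat.one_pos
  | _, .node (i := i) (j := j) ψ χ, ν, h => by
    have := ψ.index_pos
    have := χ.index_pos
    have hψ : ψ.evalNat ν = true :=
      ψ.evalNat_eq_true (by rw [h _ (by omega)]; exact decide_eq_true (by omega))
    have hχ : (χ.evalNat fun k => ν (i + k)) = false :=
      χ.evalNat_eq_false fun k hk => by rw [h _ (by omega)]; simp only [decide_eq_decide]; omega
    rw [evalNat_node, hψ, hχ]
    rfl

theorem evalNat_node_of_lt {i j c : ℕ} (ψ : BImp i) (χ : BImp j) (hc : c < i) {ν : ℕ → Bool}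
    (hν : ∀ k, ν k = decide (k ≠ c ∧ k + 1 < i + j)) :
    (node ψ χ).evalNat ν = decide (c + 1 = i) := by
  have := χ.index_pos
  rcases (Nat.succ_le_of_lt hc).eq_or_lt with rfl | hlt
  · have hψ : ψ.evalNat ν = false :=
      ψ.evalNat_eq_false fun k hk => by rw [hν]; simp only [decide_eq_decide]; omega
    rw [evalNat_node, hψ]
    simp
  · have hψ : ψ.evalNat ν = true :=
      ψ.evalNat_eq_true (by rw [hν]; exact decide_eq_true (by omega))
    have hχ : (χ.evalNat fun k => ν (i + k)) = false :=
      χ.evalNat_eq_false fun k hk => by rw [hν]; simp only [decide_eq_decide]; omega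
    rw [evalNat_node, hψ, hχ]
    exact (decide_eq_false (by omega)).symm

theorem index_le_of_evalNat_eq {n m : ℕ} (φ : BImp n) (φ' : BImp m)
    (h : φ.evalNat = φ'.evalNat) : n ≤ m := by
  by_contra! hlt
  have := φ'.index_pos
  have hφ : φ.evalNat (fun k => decide (k + 1 < n)) = false := φ.evalNat_eq_false fun _ _ => rfl
  have hφ' : φ'.evalNat (fun k => decide (k + 1 < n)) = true :=
    φ'.evalNat_eq_true (decide_eq_true (by omega))
  simp [h, hφ'] at hφ

theorem split_le_of_evalNat_eq {i j i' j' : ℕ} (ψ : BImp i) (χ : BImp j) (ψ' : BImp i')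
    (χ' : BImp j') (hn : i + j = i' + j') (h : (node ψ χ).evalNat = (node ψ' χ').evalNat) :
    i ≤ i' := by
  by_contra! hlt
  have := ψ'.index_pos
  have h₁ := evalNat_node_of_lt ψ χ (c := i' - 1) (by omega) fun _ => rfl
  have h₂ := evalNat_node_of_lt ψ' χ' (c := i' - 1) (by omega)
    (ν := fun k => decide (k ≠ i' - 1 ∧ k + 1 < i + j)) fun k => by rw [hn]
  rw [h, h₂, decide_eq_decide] at h₁
  omega

theorem evalNat_left {i j : ℕ} (ψ : BImp i) (χ : BImp j) (ν : ℕ → Bool) :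
    ψ.evalNat ν = !(node ψ χ).evalNat fun k => if k < i then ν k else decide (k + 1 < i + j) := by
  have hψ : ψ.evalNat ν = ψ.evalNat fun k => if k < i then ν k else decide (k + 1 < i + j) :=
    ψ.evalNat_congr fun k hk => by rw [if_pos hk]
  have hχ : (χ.evalNat fun k => if i + k < i then ν (i + k) else decide (i + k + 1 < i + j))
      = false :=
    χ.evalNat_eq_false fun k _ => by rw [if_neg (by omega)]; simp only [decide_eq_decide]; omega
  rw [evalNat_node, hχ, ← hψ]
  simp

theorem evalNat_right {i j : ℕ} (ψ : BImp i) (χ : BImp j) (ν : ℕ → Bool) :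
    χ.evalNat ν = (node ψ χ).evalNat fun k => if k < i then true else ν (k - i) := by
  have := ψ.index_pos
  have hψ : (ψ.evalNat fun k => if k < i then true else ν (k - i)) = true :=
    ψ.evalNat_eq_true (by rw [if_pos (by omega)])
  rw [evalNat_node, hψ]
  simp

theorem sigma_eq_of_evalNat_eq : ∀ {n m : ℕ} (φ : BImp n) (φ' : BImp m),
    φ.evalNat = φ'.evalNat → (⟨n, φ⟩ : Σ n, BImp n) = ⟨m, φ'⟩
  | _, _, .leaf, .leaf, _ => rfl
  | _, _, .leaf, .node ψ χ, h => by
    have := index_le_of_evalNat_eq _ _ h.symm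
    have := ψ.index_pos
    have := χ.index_pos
    omega
  | _, _, .node ψ χ, .leaf, h => by
    have := index_le_of_evalNat_eq _ _ h
    have := ψ.index_pos
    have := χ.index_pos
    omega
  | _, _, .node (i := i) (j := j) ψ χ, .node (i := i') (j := j') ψ' χ', h => by
    have hn := le_antisymm (index_le_of_evalNat_eq _ _ h) (index_le_of_evalNat_eq _ _ h.symm)
    obtain rfl : i = i' :=
      le_antisymm (split_le_of_evalNat_eq ψ χ ψ' χ' hn h)
        (split_le_of_evalNat_eq ψ' χ' ψ χ hn.symm h.symm)
    obtain rfl : j = j' := by omega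
    obtain rfl := sigma_mk_injective <| sigma_eq_of_evalNat_eq ψ ψ' <| funext fun ν => by
      rw [evalNat_left ψ χ, evalNat_left ψ' χ', h]
    obtain rfl := sigma_mk_injective <| sigma_eq_of_evalNat_eq χ χ' <| funext fun ν => by
      rw [evalNat_right ψ χ, evalNat_right ψ χ', h]
    rfl

theorem eval_injective (n : ℕ) : Function.Injective (eval (n := n)) := fun φ φ' h =>
  sigma_mk_injective <| sigma_eq_of_evalNat_eq φ φ' <| funext fun ν => congrFun h fun k => ν k

end BImp

theorem catalanC_add_one (n : ℕ) : catalanC (n + 1) = catalan n := by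
  rw [catalanC, catalan_eq_centralBinom_div, Nat.centralBinom, Nat.add_sub_cancel,
    Nat.mul_add_one, Nat.add_sub_cancel]

/-- The number of bracketed implications on `n ≥ 1` variables is the Catalan number
`C n`, and (by uniqueness of truth tables) so is the number of distinct propositional
functions `(Fin n → Bool) → Bool` defined by bracketed implications. -/
theorem card_bracketed_implications (n : ℕ) (hn : 1 ≤ n) :
    Nat.card (BImp n) = catalanC n ∧
    Nat.card {F : (Fin n → Bool) → Bool // ∃ φ : BImp n, ∀ ν, φ.eval ν = F ν} =
      catalanC n := by
  obtain ⟨m, rfl⟩ := Nat.exists_eq_add_of_le' hn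
  have hcard : Nat.card (BImp (m + 1)) = catalanC (m + 1) := by
    rw [BImp.card_add_one, catalanC_add_one]
  refine ⟨hcard, ?_⟩
  rw [← hcard, ← Nat.card_range_of_injective (BImp.eval_injective _)]
  exact Nat.card_congr <| Equiv.subtypeEquivRight fun F => by simp only [Set.mem_range, funext_iff]
end
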